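/- arXiv:2103.11975 — 6 statements merged into one kernel-verified Lean document; each statement's English description precedes it below -/
import Mathlib

section
/- Every equilibrium of the planar N-vortex problem has vorticities satisfying L = 0. That is, if the positions z_1, …, z_N ∈ ℂ are pairwise distinct, the vorticities Γ_1, …, Γ_N are nonzero reals, and V_n = 0 for every n = 1, …, N, then ∑_{1 ≤ j < k ≤ N} Γ_j Γ_k = 0. -/
/-!
Multiply the equilibrium condition `V n = 0` by `Γ n * conj (z n)` and sum over `n`. Grouping the
terms of the resulting double sum in pairs `{j, k}`, each pair contributes
`Γ j * Γ k * (w j / (w j - w k) + w k / (w k - w j)) = Γ j * Γ k` with `w = conj ∘ z`,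
so the total is `L`, while it is `0` by assumption.
-/

open Finset

theorem Finset.sum_sum_ne_eq_sum_sum_lt {ι M : Type*} [Fintype ι] [LinearOrder ι]
    [AddCommMonoid M] (f : ι → ι → M) :
    ∑ n, ∑ j ∈ univ.filter (· ≠ n), f n j = ∑ j, ∑ k ∈ univ.filter (j < ·), (f j k + f k j) := by
  have hsplit (n : ι) : ∑ j ∈ univ.filter (· ≠ n), f n j
      = ∑ j ∈ univ.filter (· < n), f n j + ∑ j ∈ univ.filter (n < ·), f n j := by
    rw [← sum_union (disjoint_filter.2 fun j _ h₁ h₂ => (h₁.trans h₂).false)]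
    congr 1
    ext j
    simp only [mem_filter, mem_union, mem_univ, true_and]
    exact ne_iff_lt_or_gt
  have hflip : ∑ n, ∑ j ∈ univ.filter (· < n), f n j = ∑ j, ∑ k ∈ univ.filter (j < ·), f k j :=
    sum_comm' fun _ _ => by simp
  simp only [hsplit, sum_add_distrib, hflip, add_comm]

theorem div_sub_add_div_sub_eq_one {K : Type*} [Field K] {a b : K} (h : a ≠ b) :
    a / (a - b) + b / (b - a) = 1 := by
  rw [← neg_sub a b, div_neg, ← sub_eq_add_neg, ← sub_div, div_self (sub_ne_zero.2 h)]

theorem sum_sum_ne_mul_div_sub_eq_sum_sum_lt {ι K : Type*} [Fintype ι] [LinearOrder ι] [Field K]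
    (Γ w : ι → K) (hw : Function.Injective w) :
    ∑ n, ∑ j ∈ univ.filter (· ≠ n), Γ n * w n * (Γ j / (w n - w j))
      = ∑ j, ∑ k ∈ univ.filter (j < ·), Γ j * Γ k := by
  rw [sum_sum_ne_eq_sum_sum_lt]
  refine sum_congr rfl fun j _ => sum_congr rfl fun k hk => ?_
  have hjk : w j ≠ w k := hw.ne (mem_filter.1 hk).2.ne
  calc Γ j * w j * (Γ k / (w j - w k)) + Γ k * w k * (Γ j / (w k - w j))
      = Γ j * Γ k * (w j / (w j - w k) + w k / (w k - w j)) := by ring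
    _ = Γ j * Γ k := by rw [div_sub_add_div_sub_eq_one hjk, mul_one]

theorem equilibrium_total_angular_momentum_eq_zero_general
    (N : ℕ) (Γ : Fin N → ℝ) (z : Fin N → ℂ)
    (hz : Function.Injective z)
    (hV : ∀ n : Fin N,
      ∑ j ∈ Finset.univ.filter (fun j => j ≠ n),
        (Γ j : ℂ) / (starRingEnd ℂ) (z n - z j) = 0) :
    ∑ j : Fin N, ∑ k ∈ Finset.univ.filter (fun k => j < k), Γ j * Γ k = 0 := by
  have hw : Function.Injective (starRingEnd ℂ ∘ z) := (starRingEnd ℂ).injective.comp hz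
  have hzero : ∑ n, ∑ j ∈ univ.filter (· ≠ n),
      (Γ n : ℂ) * (starRingEnd ℂ ∘ z) n * (Γ j / ((starRingEnd ℂ ∘ z) n - (starRingEnd ℂ ∘ z) j))
      = 0 := by
    simp only [Function.comp_apply, ← map_sub, ← mul_sum, hV, mul_zero, sum_const_zero]
  rw [sum_sum_ne_mul_div_sub_eq_sum_sum_lt _ _ hw] at hzero
  exact_mod_cast hzero

/-- Every equilibrium of the planar N-vortex problem has vorticities satisfying L = 0. -/
theorem equilibrium_total_angular_momentum_eq_zero
    (N : ℕ) (Γ : Fin N → ℝ) (z : Fin N → ℂ)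
    (hΓ : ∀ n, Γ n ≠ 0) (hz : Function.Injective z)
    (hV : ∀ n : Fin N,
      ∑ j ∈ Finset.univ.filter (fun j => j ≠ n),
        (Γ j : ℂ) / (starRingEnd ℂ) (z n - z j) = 0) :
    ∑ j : Fin N, ∑ k ∈ Finset.univ.filter (fun k => j < k), Γ j * Γ k = 0 :=
  equilibrium_total_angular_momentum_eq_zero_general N Γ z hz hV
end

section
/- (Elimination theory) Let X ⊆ ℂ^m be a closed algebraic subset, i.e. the common zero set of an arbitrary family of polynomials in m variables over ℂ, and let f : ℂ^m → ℂ be (the evaluation of) a polynomial. Then either the image f(X) ⊆ ℂ is a finite set, or its complement ℂ ∖ f(X) is a finite set. -/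
/-!
Let `φ : K[t] → K[x₁, …, xₘ]` send `t` to `f`. By the Nullstellensatz, `c ∈ f(X)` exactly when
the maximal ideal `(t - c)` is the contraction of a prime ideal containing the equations of `X`,
i.e. lies in the image under `Spec φ` of the closed set `V(S)`. By Chevalley's theorem this image
is constructible, a finite union of sets `V(g₁, …, gₙ) ∖ V(h)`, and the closed points `(t - c)` of
such a set are cut out by polynomial conditions in `c`, so they form a finite or cofinite set.
-/

open Polynomial PrimeSpectrum Topology

def IsFiniteOrCofinite {α : Type*} (s : Set α) : Prop := s.Finite ∨ sᶜ.Finite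

namespace IsFiniteOrCofinite

variable {α : Type*} {s t : Set α}

lemma union (hs : IsFiniteOrCofinite s) (ht : IsFiniteOrCofinite t) :
    IsFiniteOrCofinite (s ∪ t) := by
  rcases hs with hs | hs
  · rcases ht with ht | ht
    · exact .inl (hs.union ht)
    · exact .inr (ht.subset (Set.compl_subset_compl.mpr Set.subset_union_right))
  · exact .inr (hs.subset (Set.compl_subset_compl.mpr Set.subset_union_left))

lemma sdiff (hs : IsFiniteOrCofinite s) (ht : IsFiniteOrCofinite t) :
    IsFiniteOrCofinite (s \ t) := by
  rcases hs with hs | hs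
  · exact .inl hs.sdiff
  · rcases ht with ht | ht
    · exact .inr (by rw [Set.compl_sdiff]; exact ht.union hs)
    · exact .inl (ht.subset fun _ hx => hx.2)

lemma biUnion {ι : Type*} (I : Finset ι) {s : ι → Set α}
    (hs : ∀ i ∈ I, IsFiniteOrCofinite (s i)) : IsFiniteOrCofinite (⋃ i ∈ I, s i) := by
  classical
  induction I using Finset.induction_on with
  | empty => simp [IsFiniteOrCofinite]
  | insert i I _ ih =>
    rw [Finset.set_biUnion_insert]
    exact (hs i (Finset.mem_insert_self i I)).union
      (ih fun j hj => hs j (Finset.mem_insert_of_mem hj))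

end IsFiniteOrCofinite

section EvalPoint

variable {K : Type*} [Field K]

lemma isFiniteOrCofinite_setOf_forall_eval_eq_zero (T : Set K[X]) :
    IsFiniteOrCofinite {c : K | ∀ p ∈ T, p.eval c = 0} := by
  by_cases hT : ∀ p ∈ T, p = 0
  · exact .inr (Set.finite_empty.subset fun c hc => hc fun p hp => by simp [hT p hp])
  · obtain ⟨p, hpT, hp⟩ := by simpa only [not_forall] using hT
    exact .inl ((finite_setOfPred_isRoot hp).subset fun c hc => hc p hpT)

noncomputable def Polynomial.evalPoint (c : K) : PrimeSpectrum K[X] :=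
  ⟨RingHom.ker (evalRingHom c), RingHom.ker_isPrime _⟩

lemma Polynomial.evalPoint_mem_zeroLocus_iff {c : K} {T : Set K[X]} :
    evalPoint c ∈ zeroLocus T ↔ ∀ p ∈ T, p.eval c = 0 := by
  simp [evalPoint, mem_zeroLocus, Set.subset_def]

lemma Topology.IsConstructible.isFiniteOrCofinite_preimage_evalPoint
    {Z : Set (PrimeSpectrum K[X])} (hZ : IsConstructible Z) :
    IsFiniteOrCofinite (evalPoint ⁻¹' Z) := by
  obtain ⟨D, rfl⟩ := exists_constructibleSetData_iff.mpr hZ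
  simp only [ConstructibleSetData.toSet, BasicConstructibleSetData.toSet, Set.preimage_iUnion₂,
    Set.preimage_sdiff]
  refine IsFiniteOrCofinite.biUnion D fun C _ => .sdiff ?_ ?_
  · convert isFiniteOrCofinite_setOf_forall_eval_eq_zero (Set.range C.g) using 1
    ext; exact evalPoint_mem_zeroLocus_iff
  · convert isFiniteOrCofinite_setOf_forall_eval_eq_zero {C.f} using 1
    ext; exact evalPoint_mem_zeroLocus_iff

end EvalPoint

lemma isConstructible_comap_aeval_image_zeroLocus {R σ : Type*} [CommRing R]
    [IsNoetherianRing R] [Finite σ] (S : Set (MvPolynomial σ R)) (f : MvPolynomial σ R) :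
    IsConstructible (comap (aeval (R := R) f).toRingHom '' zeroLocus S) := by
  have hφ : (aeval (R := R) f).toRingHom.FinitePresentation :=
    RingHom.FinitePresentation.of_finiteType.mp <|
      RingHom.FiniteType.of_comp_finiteType (f := C) <| by
      rw [← algebraMap_eq, AlgHom.toRingHom_eq_coe, AlgHom.comp_algebraMap]
      exact RingHom.finiteType_algebraMap.mpr inferInstance
  refine isConstructible_comap_image hφ ?_
  rw [← zeroLocus_span, ← isConstructible_compl]
  exact (isRetrocompact_zeroLocus_compl_of_fg (IsNoetherian.noetherian _)).isConstructible
    (isClosed_zeroLocus _).isOpen_compl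

lemma MvPolynomial.eval_polynomial_aeval {K σ : Type*} [Field K] (x : σ → K)
    (f : MvPolynomial σ K) (p : K[X]) :
    eval x (Polynomial.aeval f p) = p.eval (eval x f) := by
  simpa [coe_aeval_eq_eval] using (Polynomial.aeval_algHom_apply (aeval x) f p).symm

section Nullstellensatz

variable {K σ : Type*} [Field K] [IsAlgClosed K] [Finite σ]

lemma mem_image_eval_zeroSet_iff (S : Set (MvPolynomial σ K)) (f : MvPolynomial σ K) (c : K) :
    c ∈ (fun x => MvPolynomial.eval x f) '' {x | ∀ p ∈ S, MvPolynomial.eval x p = 0} ↔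
      evalPoint c ∈ comap (aeval (R := K) f).toRingHom '' zeroLocus S := by
  constructor
  · rintro ⟨x, hx, rfl⟩
    refine ⟨⟨RingHom.ker (MvPolynomial.eval x), RingHom.ker_isPrime _⟩, fun p hp => hx p hp, ?_⟩
    ext p
    simp [evalPoint, MvPolynomial.eval_polynomial_aeval]
  · rintro ⟨P, hSP, hPc⟩
    have hfc : f - MvPolynomial.C c ∈ P.asIdeal := by
      have : X - C c ∈ (evalPoint c).asIdeal := by simp [evalPoint]
      simpa [← hPc] using this
    obtain ⟨M, hM, hPM⟩ := P.asIdeal.exists_le_maximal P.isPrime.ne_top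
    obtain ⟨x, rfl⟩ := MvPolynomial.isMaximal_iff_eq_vanishingIdeal_singleton.mp hM
    refine ⟨x, fun p hp => ?_, ?_⟩
    · simpa using hPM (hSP hp)
    · simpa [sub_eq_zero] using hPM hfc

theorem isFiniteOrCofinite_image_eval_zeroSet (S : Set (MvPolynomial σ K))
    (f : MvPolynomial σ K) :
    IsFiniteOrCofinite
      ((fun x => MvPolynomial.eval x f) '' {x | ∀ p ∈ S, MvPolynomial.eval x p = 0}) := by
  have himage : (fun x => MvPolynomial.eval x f) '' {x | ∀ p ∈ S, MvPolynomial.eval x p = 0} =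
      evalPoint ⁻¹' (comap (aeval (R := K) f).toRingHom '' zeroLocus S) :=
    Set.ext (mem_image_eval_zeroSet_iff S f)
  rw [himage]
  exact (isConstructible_comap_aeval_image_zeroLocus S f).isFiniteOrCofinite_preimage_evalPoint

end Nullstellensatz

/-- Elimination theory: the polynomial image of a closed algebraic subset of ℂ^m is
either finite or the complement of a finite set. -/
theorem polynomial_image_of_algebraic_set_finite_or_cofinite
    (m : ℕ) (S : Set (MvPolynomial (Fin m) ℂ)) (f : MvPolynomial (Fin m) ℂ) :
    ((fun x : Fin m → ℂ => MvPolynomial.eval x f) ''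
        {x : Fin m → ℂ | ∀ p ∈ S, MvPolynomial.eval x p = 0}).Finite ∨
    (((fun x : Fin m → ℂ => MvPolynomial.eval x f) ''
        {x : Fin m → ℂ | ∀ p ∈ S, MvPolynomial.eval x p = 0})ᶜ).Finite :=
  isFiniteOrCofinite_image_eval_zeroSet S f
end

section
/- (Roberts' continuum) Let the vorticities be Γ_1 = Γ_2 = Γ_3 = Γ_4 = 2 and Γ_5 = −1. For any real numbers a, t with a² + t² = 1, a ≠ 0 and t ≠ 0, the configuration z = (a, i t, −a, −i t, 0) ∈ ℂ⁵ has pairwise distinct components and satisfies V_n = ∑_{j ≠ n} Γ_j / conj(z_n − z_j) = 4 z_n for every n = 1, …, 5; hence it is a relative equilibrium of the five-vortex problem. -/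
/-!
At a vertex `p` of the rhombus `(p, q, -p, -q)` the opposite vertex (vorticity `Γ`, offset `2p`)
and the centre (vorticity `-Γ/2`, offset `p`) cancel, and the two adjacent vertices contribute
`Γ/conj(p - q) + Γ/conj(p + q) = 2Γ conj p / (conj p ^ 2 - conj q ^ 2)`. For `p` real and `q`
imaginary this is `2Γ p / (p ^ 2 - q ^ 2)`, the same multiple of `p` at every vertex, while the
centre feels no field by symmetry. With `Γ = 2`, `p = a`, `q = i t` the factor is
`4 / (a ^ 2 + t ^ 2) = 4`.
-/

open Finset Complex ComplexConjugate

noncomputable def vortexField {N : ℕ} (Γ : Fin N → ℝ) (z : Fin N → ℂ) (n : Fin N) : ℂ :=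
  ∑ j ∈ univ.filter (fun j => j ≠ n), (Γ j : ℂ) / conj (z n - z j)

def rhombus (p q : ℂ) : Fin 5 → ℂ := ![p, q, -p, -q, 0]

section Rhombus

variable {p q : ℂ}

lemma ne_of_conj_eq_self_of_conj_eq_neg (hp : conj p = p) (hq : conj q = -q) (hq0 : q ≠ 0) :
    p ≠ q := by
  rintro rfl
  exact hq0 (CharZero.eq_neg_self_iff.mp (hp.symm.trans hq))

lemma rhombus_injective (hp0 : p ≠ 0) (hq0 : q ≠ 0) (hpq : p ≠ q) (hpq_neg : p ≠ -q) :
    Function.Injective (rhombus p q) := by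
  intro i j hij
  fin_cases i <;> fin_cases j <;>
    simp only [rhombus, Matrix.cons_val, Fin.reduceFinMk] at hij ⊢ <;> grind

lemma vortexField_rhombus (Γ : ℝ) (hp : conj p = p) (hq : conj q = -q) (n : Fin 5) :
    vortexField ![Γ, Γ, Γ, Γ, -Γ / 2] (rhombus p q) n =
      2 * Γ / (p ^ 2 - q ^ 2) * rhombus p q n := by
  fin_cases n <;>
    simp only [vortexField, rhombus, sum_filter, Fin.sum_univ_five, Matrix.cons_val,
      Fin.reduceFinMk, map_sub, hp, hq, ofReal_div, ofReal_neg, ofReal_ofNat] <;>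
    grind

end Rhombus

/-- Roberts' continuum: for vorticities (2,2,2,2,−1) and a² + t² = 1 with a, t ≠ 0,
the rhombus configuration (a, it, −a, −it, 0) is a relative equilibrium with V_n = 4 z_n. -/
theorem roberts_continuum_relative_equilibrium
    (a t : ℝ) (h : a ^ 2 + t ^ 2 = 1) (ha : a ≠ 0) (ht : t ≠ 0) :
    let Γ : Fin 5 → ℝ := ![2, 2, 2, 2, -1]
    let z : Fin 5 → ℂ := ![(a : ℂ), Complex.I * t, -(a : ℂ), -(Complex.I * t), 0]
    Function.Injective z ∧
    ∀ n : Fin 5,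
      ∑ j ∈ Finset.univ.filter (fun j => j ≠ n),
        (Γ j : ℂ) / (starRingEnd ℂ) (z n - z j) = 4 * z n := by
  intro Γ z
  have hp : conj (a : ℂ) = a := conj_ofReal a
  have hq : conj (I * t) = -(I * t) := by simp
  have hq' : conj (-(I * t)) = -(-(I * t)) := by rw [map_neg, hq]
  have hq0 : I * t ≠ 0 := mul_ne_zero I_ne_zero (ofReal_ne_zero.mpr ht)
  refine ⟨rhombus_injective (ofReal_ne_zero.mpr ha) hq0
    (ne_of_conj_eq_self_of_conj_eq_neg hp hq hq0)
    (ne_of_conj_eq_self_of_conj_eq_neg hp hq' (neg_ne_zero.mpr hq0)), fun n => ?_⟩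
  have hΓ : Γ = ![2, 2, 2, 2, -2 / 2] := by norm_num [Γ]
  have hsq : (a : ℂ) ^ 2 - (I * t) ^ 2 = 1 := by
    have h' : (a : ℂ) ^ 2 + (t : ℂ) ^ 2 = 1 := by exact_mod_cast h
    linear_combination h' - (t : ℂ) ^ 2 * I_sq
  change vortexField Γ (rhombus a (I * t)) n = 4 * rhombus a (I * t) n
  rw [hΓ, vortexField_rhombus 2 hp hq, hsq]
  norm_num
end

section
/- For the vorticities Γ_1 = Γ_2 = Γ_3 = Γ_4 = 2, Γ_5 = −1, the five-vortex problem possesses infinitely many pairwise non-equivalent relative equilibria: there is an infinite set of configurations z ∈ ℂ⁵ with pairwise distinct components, each satisfying V_n = λ(z_n − z_0) for some λ ∈ ℝ∖{0} and z_0 ∈ ℂ, no two of which are related by z'_n = b(z_n + a) for some a ∈ ℂ and b ∈ ℂ∖{0}. -/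
open Finset

open Complex in
set_option maxHeartbeats 2000000 in
/-- For vorticities (2,2,2,2,−1) the five-vortex problem has infinitely many pairwise
non-equivalent relative equilibria. -/
theorem five_vortex_infinitely_many_relative_equilibria :
    let Γ : Fin 5 → ℝ := ![2, 2, 2, 2, -1]
    ∃ S : Set (Fin 5 → ℂ), S.Infinite ∧
      (∀ z ∈ S, Function.Injective z ∧
        ∃ lam : ℝ, lam ≠ 0 ∧ ∃ z₀ : ℂ, ∀ n : Fin 5,
          ∑ j ∈ Finset.univ.filter (fun j => j ≠ n),
            (Γ j : ℂ) / (starRingEnd ℂ) (z n - z j) = (lam : ℂ) * (z n - z₀)) ∧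
      (∀ z ∈ S, ∀ z' ∈ S, z ≠ z' →
        ¬ ∃ a b : ℂ, b ≠ 0 ∧ ∀ n : Fin 5, z' n = b * (z n + a)) := by
  intro Γ
  set f : ℝ → (Fin 5 → ℂ) := fun t => ![1, -1, I*t, -(I*t), 0] with hf
  refine ⟨f '' Set.Ioi 0, ?_, ?_, ?_⟩
  · apply Set.Infinite.image ?_ (Set.Ioi_infinite 0)
    intro s hs u hu h
    have h2 := congrFun h 2
    simp only [hf, Matrix.cons_val_two, Matrix.tail_cons, Matrix.head_cons] at h2
    have := mul_left_cancel₀ Complex.I_ne_zero h2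
    exact_mod_cast this
  · rintro z ⟨t, ht, rfl⟩
    have ht' : (0:ℝ) < t := ht
    have ht0 : (t:ℂ) ≠ 0 := by exact_mod_cast ht'.ne'
    have hIt : I*(t:ℂ) ≠ 0 := mul_ne_zero Complex.I_ne_zero ht0
    have h1 : (1:ℂ) + I*t ≠ 0 := by
      intro h; have := congrArg Complex.re h; simp at this
    have h2 : (1:ℂ) - I*t ≠ 0 := by
      intro h; have := congrArg Complex.re h; simp at this
    have h3 : (-1:ℂ) - I*t ≠ 0 := by
      intro h; have := congrArg Complex.re h; simp at this
    have h7 : (-1:ℂ) + I*t ≠ 0 := by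
      intro h; have := congrArg Complex.re h; simp at this
    have h4 : (-1:ℂ) + (t:ℂ)*I ≠ 0 := by
      intro h; have := congrArg Complex.re h; simp at this
    have h5 : (1:ℂ) + (t:ℂ)*I ≠ 0 := by
      intro h; have := congrArg Complex.re h; simp at this
    have h6 : (1:ℂ) - (t:ℂ)*I ≠ 0 := by
      intro h; have := congrArg Complex.re h; simp at this
    have h8 : (-1:ℂ) - (t:ℂ)*I ≠ 0 := by
      intro h; have := congrArg Complex.re h; simp at this
    have ht2 : (1 + t^2 : ℝ) ≠ 0 := by positivity
    have hd : (1:ℂ) + (t:ℂ)^2 ≠ 0 := by exact_mod_cast ht2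
    have e2 : I^2 = -1 := Complex.I_sq
    have e3 : I^3 = -I := by rw [pow_succ, e2]; ring
    have e4 : I^4 = 1 := by rw [pow_succ, e3]; simp [Complex.I_mul_I]
    have e5 : I^5 = I := by rw [pow_succ, e4]; ring
    have e6 : I^6 = -1 := by rw [pow_succ, e5, Complex.I_mul_I]
    have e7 : I^7 = -I := by rw [pow_succ, e6]; ring
    have e8 : I^8 = 1 := by rw [pow_succ, e7]; simp [Complex.I_mul_I]
    have hnz : (t:ℂ)^2 + (t:ℂ)^4*2 + (t:ℂ)^6 ≠ 0 := by
      have h : (t:ℂ)^2 + (t:ℂ)^4*2 + (t:ℂ)^6 = (t:ℂ)^2*(1+(t:ℂ)^2)^2 := by ring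
      rw [h]; exact mul_ne_zero (pow_ne_zero _ ht0) (pow_ne_zero _ hd)
    constructor
    · -- injectivity
      have d01 : (1:ℂ) ≠ -1 := by norm_num
      have d02 : (1:ℂ) ≠ I*t := by intro h; have := congrArg Complex.re h; simp at this
      have d03 : (1:ℂ) ≠ -(I*t) := by intro h; have := congrArg Complex.re h; simp at this
      have d04 : (1:ℂ) ≠ 0 := one_ne_zero
      have d12 : (-1:ℂ) ≠ I*t := by intro h; have := congrArg Complex.re h; simp at this
      have d13 : (-1:ℂ) ≠ -(I*t) := by intro h; have := congrArg Complex.re h; simp at this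
      have d14 : (-1:ℂ) ≠ 0 := by norm_num
      have d23 : I*(t:ℂ) ≠ -(I*t) := by intro h; apply hIt; linear_combination h/2
      have d24 : I*(t:ℂ) ≠ 0 := hIt
      have d34 : -(I*(t:ℂ)) ≠ 0 := neg_ne_zero.mpr hIt
      intro i j hij
      rw [hf] at hij
      fin_cases i <;> fin_cases j <;>
        simp_all [ Matrix.cons_val_zero, Matrix.cons_val_one, Matrix.head_cons,
          Matrix.cons_val_two, Matrix.tail_cons, Matrix.cons_val_three, Matrix.cons_val_four]
    · refine ⟨4/(1+t^2), by positivity, 0, ?_⟩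
      intro n
      fin_cases n <;>
      · rw [Finset.sum_filter, Fin.sum_univ_five]
        simp only [hf, Γ, Matrix.cons_val_zero, Matrix.cons_val_one, Matrix.head_cons,
          Matrix.cons_val_two, Matrix.tail_cons, Matrix.cons_val_three, Matrix.cons_val_four,
          map_sub, map_one, map_neg, map_mul, Complex.conj_I, Complex.conj_ofReal, map_zero]
        norm_num
        push_cast
        field_simp [h1, h2, h3, h7, Complex.I_ne_zero]
        try rw [Complex.inv_I]
        try field_simp [h1, h2, h3, h7]
        try ring_nf
        try simp only [e2, e3, e4, e5, e6, e7, e8]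
        try ring_nf
        try simp only [e2, e3, e4, e5, e6, e7, e8]
        try field_simp [hnz, ht0, hd, h1, h2, h3, h7, h4, h5, h6, h8]
        try ring_nf
        try simp only [e2, e3, e4, e5, e6, e7, e8]
        try field_simp [hnz, ht0, hd, h1, h2, h3, h7, h4, h5, h6, h8]
        try ring_nf
        try simp only [e2, e3, e4, e5, e6, e7, e8]
        try field_simp [hnz]
        try ring
  · rintro z ⟨t, ht, rfl⟩ z' ⟨s, hs, rfl⟩ hne ⟨a, b, hb, h⟩
    have h4 := h 4
    have h0 := h 0
    have h2 := h 2
    simp only [hf, Matrix.cons_val_zero, Matrix.cons_val_two, Matrix.tail_cons,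
      Matrix.head_cons, Matrix.cons_val_four] at h4 h0 h2
    have ha : a = 0 := by
      rcases mul_eq_zero.mp h4.symm with h' | h'
      · exact absurd h' hb
      · simpa using h'
    subst ha
    have hb1 : b = 1 := by simpa using h0.symm
    subst hb1
    apply hne
    have hts : (s:ℂ) = (t:ℂ) := by
      have h2' := h2
      simp only [one_mul, add_zero] at h2'
      exact mul_left_cancel₀ Complex.I_ne_zero h2'
    have hst : s = t := by exact_mod_cast hts
    rw [hst]
end

section
/- (Rule III) Let (Λ^k, z^k, w^k), ε_k be a singular sequence of normalized central configurations of the N-vortex problem with vorticities Γ_1, …, Γ_N ∈ ℝ∖{0}, and let J ⊆ {1, …, N} be such that for every j ∈ J and every l ∉ J one has ε_k² ≺ w^k_j − w^k_l (no z-stroke joins J to its complement, so J is an isolated component of the z-diagram). Then the moment of vorticity of J is z-close to the origin: ε_k² · ∑_{j ∈ J} Γ_j z^k_j → 0 as k → ∞. -/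
open Finset Filter Topology

/-- Normalized central configuration of the planar N-vortex problem (N = M + 2),
in the complexified variables (Λ, z, w), with the normalizations removing the
translation, rotation and dilation freedoms. -/
def IsNCC {M : ℕ} (Γ : Fin (M + 2) → ℝ) (Λ : ℂ) (z w : Fin (M + 2) → ℂ) : Prop :=
  Λ ≠ 0 ∧ Function.Injective z ∧ Function.Injective w ∧
  (∀ n, Λ * z n =
    ∑ j ∈ Finset.univ.filter (fun j => j ≠ n), (Γ j : ℂ) / (w n - w j)) ∧
  (∀ n, Λ⁻¹ * w n =
    ∑ j ∈ Finset.univ.filter (fun j => j ≠ n), (Γ j : ℂ) / (z n - z j)) ∧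
  z 1 - z 0 = w 1 - w 0

/-- max(max_n |z_n|, max_{i ≠ j} |w_i − w_j|⁻¹). -/
noncomputable def bigSup {M : ℕ} (z w : Fin (M + 2) → ℂ) : ℝ :=
  sSup ({r | ∃ n, r = ‖z n‖} ∪
        {r | ∃ i j, i ≠ j ∧ r = ‖w i - w j‖⁻¹})

/-- a ≺ b : the ratio a/b tends to 0. -/
def Prec (a b : ℕ → ℂ) : Prop := Tendsto (fun k => a k / b k) atTop (nhds 0)

/-- a ⪯ b : the ratio a/b is bounded. -/
def BddRatio (a b : ℕ → ℂ) : Prop := ∃ C : ℝ, ∀ k, ‖a k / b k‖ ≤ C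

/-- a ≈ b : both a/b and b/a are bounded. -/
def SimEq (a b : ℕ → ℂ) : Prop := BddRatio a b ∧ BddRatio b a

/-- A singular sequence of normalized central configurations: |Λ^k| = 1,
ε_k > 0 tends to 0, and the maximal components of 𝒵 and 𝒲 both equal ε_k⁻². -/
def IsSingularSeq {M : ℕ} (Γ : Fin (M + 2) → ℝ) (Λ : ℕ → ℂ)
    (z w : ℕ → Fin (M + 2) → ℂ) (ε : ℕ → ℝ) : Prop :=
  (∀ k, IsNCC Γ (Λ k) (z k) (w k)) ∧
  (∀ k, ‖Λ k‖ = 1) ∧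
  (∀ k, 0 < ε k) ∧ Tendsto ε atTop (nhds 0) ∧
  (∀ k, bigSup (z k) (w k) = ε k ^ (-2 : ℤ)) ∧
  (∀ k, bigSup (w k) (z k) = ε k ^ (-2 : ℤ))

/-! Multiplying the defining equation `Λ z_n = ∑_{j ≠ n} Γ_j / (w_n - w_j)` by `Γ_n` and summing over
`n ∈ J`, the interactions inside `J` cancel by antisymmetry. Hence `Λ ∑_{j ∈ J} Γ_j z_j` only sees the
pairs joining `J` to its complement, and after scaling by `ε²` each such term is
`Γ_n Γ_j ε² / (w_n - w_j) → 0` because no z-stroke leaves `J`. Finally `|Λ| = 1`. -/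

lemma Finset.sum_sum_eq_zero_of_antisymm {ι G : Type*} [AddCommGroup G] [IsAddTorsionFree G]
    (s : Finset ι) {f : ι → ι → G} (hf : ∀ i j, f i j = -f j i) :
    ∑ i ∈ s, ∑ j ∈ s, f i j = 0 := by
  refine self_eq_neg.mp ?_
  calc ∑ i ∈ s, ∑ j ∈ s, f i j = ∑ j ∈ s, ∑ i ∈ s, f i j := Finset.sum_comm
    _ = ∑ j ∈ s, ∑ i ∈ s, -f j i :=
        Finset.sum_congr rfl fun j _ => Finset.sum_congr rfl fun i _ => hf i j
    _ = -∑ i ∈ s, ∑ j ∈ s, f i j := by simp only [Finset.sum_neg_distrib]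

lemma sum_sum_mul_div_sub_eq_zero {ι K : Type*} [Field K] [CharZero K]
    (s : Finset ι) (Γ w : ι → K) :
    ∑ n ∈ s, ∑ j ∈ s, Γ n * Γ j / (w n - w j) = 0 :=
  s.sum_sum_eq_zero_of_antisymm fun n j => by rw [← neg_sub, div_neg, mul_comm]

lemma IsNCC.mul_sum_mul_eq_sum_sum_compl {M : ℕ} {Γ : Fin (M + 2) → ℝ} {Λ : ℂ}
    {z w : Fin (M + 2) → ℂ} (h : IsNCC Γ Λ z w) (J : Finset (Fin (M + 2))) :
    Λ * ∑ j ∈ J, (Γ j : ℂ) * z j = ∑ n ∈ J, ∑ j ∈ Jᶜ, (Γ n : ℂ) * Γ j / (w n - w j) := by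
  -- the excluded term `j = n` is `Γ_n / 0 = 0`, so the sum may run over all `j`
  have hsum : ∀ n, Λ * z n = ∑ j, (Γ j : ℂ) / (w n - w j) := fun n => by
    rw [h.2.2.2.1 n, Finset.sum_filter_of_ne]
    rintro j - hj rfl
    simp at hj
  calc Λ * ∑ j ∈ J, (Γ j : ℂ) * z j = ∑ n ∈ J, ∑ j, (Γ n : ℂ) * Γ j / (w n - w j) := by
        simp only [Finset.mul_sum, mul_left_comm Λ (Γ _ : ℂ), hsum, mul_div_assoc]
    _ = ∑ n ∈ J, ∑ j ∈ Jᶜ, (Γ n : ℂ) * Γ j / (w n - w j) := by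
        simp only [← Finset.sum_add_sum_compl J, Finset.sum_add_distrib,
          sum_sum_mul_div_sub_eq_zero, zero_add]

lemma tendsto_zero_of_norm_eq_one_of_tendsto_mul {α 𝕜 : Type*} [NormedDivisionRing 𝕜]
    {l : Filter α} {u f : α → 𝕜} (hu : ∀ k, ‖u k‖ = 1)
    (h : Tendsto (fun k => u k * f k) l (𝓝 0)) : Tendsto f l (𝓝 0) := by
  rw [tendsto_zero_iff_norm_tendsto_zero] at h ⊢
  simpa only [norm_mul, hu, one_mul] using h

theorem rule_III_general {M : ℕ} (Γ : Fin (M + 2) → ℝ)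
    (Λ : ℕ → ℂ) (z w : ℕ → Fin (M + 2) → ℂ) (ε : ℕ → ℝ)
    (hsing : IsSingularSeq Γ Λ z w ε)
    (J : Finset (Fin (M + 2)))
    (hiso : ∀ j ∈ J, ∀ l ∉ J,
      Prec (fun k => ((ε k : ℂ)) ^ 2) (fun k => w k j - w k l)) :
    Tendsto (fun k => ((ε k : ℂ)) ^ 2 * ∑ j ∈ J, (Γ j : ℂ) * z k j) atTop (nhds 0) := by
  obtain ⟨hncc, hΛ, -⟩ := hsing
  refine tendsto_zero_of_norm_eq_one_of_tendsto_mul hΛ ?_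
  have hmoment : ∀ k, Λ k * ((ε k : ℂ) ^ 2 * ∑ j ∈ J, (Γ j : ℂ) * z k j) =
      ∑ n ∈ J, ∑ j ∈ Jᶜ, (Γ n : ℂ) * Γ j * ((ε k : ℂ) ^ 2 / (w k n - w k j)) := fun k => by
    rw [mul_left_comm, (hncc k).mul_sum_mul_eq_sum_sum_compl J]
    simp only [Finset.mul_sum, mul_div_left_comm]
  simp only [hmoment]
  simpa using tendsto_finsetSum J fun n hn => tendsto_finsetSum Jᶜ fun j hj =>
    (hiso n hn j (Finset.mem_compl.mp hj)).const_mul ((Γ n : ℂ) * Γ j)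

/-- Rule III: the moment of vorticity of an isolated component of the z-diagram is
z-close to the origin. -/
theorem rule_III {M : ℕ} (Γ : Fin (M + 2) → ℝ) (hΓ : ∀ j, Γ j ≠ 0)
    (Λ : ℕ → ℂ) (z w : ℕ → Fin (M + 2) → ℂ) (ε : ℕ → ℝ)
    (hsing : IsSingularSeq Γ Λ z w ε)
    (J : Finset (Fin (M + 2)))
    (hiso : ∀ j ∈ J, ∀ l ∉ J,
      Prec (fun k => ((ε k : ℂ)) ^ 2) (fun k => w k j - w k l)) :
    Tendsto (fun k => ((ε k : ℂ)) ^ 2 * ∑ j ∈ J, (Γ j : ℂ) * z k j) atTop (nhds 0) :=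
  rule_III_general Γ Λ z w ε hsing J hiso
end

section
/- (Proposition 3.3) Let (Λ^k, z^k, w^k), ε_k be a singular sequence of normalized central configurations of the N-vortex problem with vorticities Γ_1, …, Γ_N ∈ ℝ∖{0}. Suppose the vertices 1, 2, 3 form an isolated triangle of z-strokes: w^k_i − w^k_j ≈ ε_k² for all pairs i < j in {1,2,3}, and ε_k² ≺ w^k_i − w^k_l for all i ∈ {1,2,3} and l ∉ {1,2,3}; and suppose none of the vertices 1, 2, 3 is z-circled: z^k_j ≺ ε_k^{-2} for j ∈ {1,2,3}. Then L₁₂₃ = Γ_1Γ_2 + Γ_2Γ_3 + Γ_3Γ_1 = 0. -/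
open Finset Filter Topology

/-!
Multiply the equation `Λ z_n = ∑_{j ≠ n} Γ_j / (w_n - w_j)` by `Γ_n (w_n - w_1)` and add over
the two triangle vertices `n = 2, 3`. Within the triangle the weights telescope to the constant
`L₁₂₃ = Γ₁Γ₂ + Γ₂Γ₃ + Γ₃Γ₁`, whatever the shape of the triangle. Every other term tends to zero:
on the left `(w_n - w_1) z_n` is `O(ε²) · o(ε⁻²)` since no vertex is circled, and the
interactions with a vertex `l` outside the triangle contribute `(w_n - w_1) / (w_n - w_l)`,
which is `O(ε²) / ω(ε²)` since the triangle is isolated.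
-/

theorem BddRatio.trans_prec {a b c : ℕ → ℂ} (hab : BddRatio a b) (hbc : Prec b c)
    (hb : ∀ k, b k ≠ 0) : Prec a c := by
  obtain ⟨C, hC⟩ := hab
  have hsplit : (fun k => a k / c k) = fun k => b k / c k * (a k / b k) := by
    ext k
    rw [div_mul_div_comm, mul_comm (b k), mul_div_mul_right _ _ (hb k)]
  rw [Prec, hsplit]
  exact hbc.zero_mul_isBoundedUnder_le (isBoundedUnder_of ⟨C, hC⟩)

theorem triangle_identity {K : Type*} [Field K] {a b c : K} (hab : a ≠ b) (hac : a ≠ c)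
    (hbc : b ≠ c) (γ₀ γ₁ γ₂ : K) :
    γ₁ * (b - a) * (γ₀ / (b - a) + γ₂ / (b - c)) + γ₂ * (c - a) * (γ₀ / (c - a) + γ₁ / (c - b))
      = γ₀ * γ₁ + γ₁ * γ₂ + γ₂ * γ₀ := by
  have hab' : b - a ≠ 0 := sub_ne_zero.2 hab.symm
  have hac' : c - a ≠ 0 := sub_ne_zero.2 hac.symm
  have hbc' : b - c ≠ 0 := sub_ne_zero.2 hbc
  have hcb' : c - b ≠ 0 := sub_ne_zero.2 hbc.symm
  field_simp
  ring

section Vortex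

variable {M : ℕ}

noncomputable def outsideInteraction (Γ : Fin (M + 2) → ℝ) (w : Fin (M + 2) → ℂ)
    (s : Finset (Fin (M + 2))) (n : Fin (M + 2)) : ℂ :=
  ∑ l ∈ sᶜ, (Γ l : ℂ) / (w n - w l)

variable {Γ : Fin (M + 2) → ℝ} {Λ : ℂ} {z w : Fin (M + 2) → ℂ}

theorem IsNCC.mul_eq_sum_add_outsideInteraction (h : IsNCC Γ Λ z w) (s : Finset (Fin (M + 2)))
    (n : Fin (M + 2)) :
    Λ * z n = ∑ j ∈ s, (Γ j : ℂ) / (w n - w j) + outsideInteraction Γ w s n := by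
  -- the excluded diagonal term is `Γ n / 0 = 0`
  rw [h.2.2.2.1 n, filter_ne', sum_erase _ (by simp), outsideInteraction,
    sum_add_sum_compl]

theorem IsNCC.triangle_moment_eq (h : IsNCC Γ Λ z w) {i₀ i₁ i₂ : Fin (M + 2)} (h₀₁ : i₀ ≠ i₁)
    (h₀₂ : i₀ ≠ i₂) (h₁₂ : i₁ ≠ i₂) :
    (Γ i₁ : ℂ) * (w i₁ - w i₀) * (Λ * z i₁) + (Γ i₂ : ℂ) * (w i₂ - w i₀) * (Λ * z i₂)
      = ((Γ i₀ * Γ i₁ + Γ i₁ * Γ i₂ + Γ i₂ * Γ i₀ : ℝ) : ℂ)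
        + ((Γ i₁ : ℂ) * (w i₁ - w i₀) * outsideInteraction Γ w {i₀, i₁, i₂} i₁
          + (Γ i₂ : ℂ) * (w i₂ - w i₀) * outsideInteraction Γ w {i₀, i₁, i₂} i₂) := by
  have hw := h.2.2.1
  have key := triangle_identity (hw.ne h₀₁) (hw.ne h₀₂) (hw.ne h₁₂) (Γ i₀ : ℂ) (Γ i₁) (Γ i₂)
  have h₀ : i₀ ∉ ({i₁, i₂} : Finset _) := by simp [h₀₁, h₀₂]
  have h₁ : i₁ ∉ ({i₂} : Finset _) := by simpa using h₁₂
  rw [h.mul_eq_sum_add_outsideInteraction _ i₁, h.mul_eq_sum_add_outsideInteraction _ i₂,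
    sum_insert h₀, sum_insert h₁, sum_singleton, sum_insert h₀, sum_insert h₁, sum_singleton]
  simp only [sub_self, div_zero, add_zero, zero_add]
  push_cast
  linear_combination key

end Vortex

section Asymptotics

variable {ε : ℕ → ℝ}

theorem tendsto_mul_unit_mul_zero {a c Λ : ℕ → ℂ} (hε : ∀ k, ε k ≠ 0)
    (hΛ : ∀ k, ‖Λ k‖ = 1) (ha : BddRatio a fun k => (ε k : ℂ) ^ 2)
    (hc : Prec c fun k => ((ε k ^ (-2 : ℤ) : ℝ) : ℂ)) (γ : ℂ) :
    Tendsto (fun k => γ * a k * (Λ k * c k)) atTop (𝓝 0) := by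
  have hε2 : ∀ k, (ε k : ℂ) ^ 2 ≠ 0 := fun k => by exact_mod_cast pow_ne_zero 2 (hε k)
  have hac : Prec a fun k => (c k)⁻¹ := by
    refine ha.trans_prec ?_ hε2
    refine hc.congr fun k => ?_
    push_cast
    rw [zpow_neg, div_inv_eq_mul, div_inv_eq_mul, mul_comm, zpow_ofNat]
  rw [tendsto_zero_iff_norm_tendsto_zero]
  simpa [hΛ, div_inv_eq_mul, mul_assoc] using (tendsto_norm_zero.comp hac).const_mul ‖γ‖

theorem tendsto_mul_outsideInteraction_zero {M : ℕ} {Γ : Fin (M + 2) → ℝ}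
    {w : ℕ → Fin (M + 2) → ℂ} {s : Finset (Fin (M + 2))} {n m : Fin (M + 2)}
    (hε : ∀ k, ε k ≠ 0) (hnm : BddRatio (fun k => w k n - w k m) fun k => (ε k : ℂ) ^ 2)
    (hiso : ∀ l ∉ s, Prec (fun k => (ε k : ℂ) ^ 2) fun k => w k n - w k l) (γ : ℂ) :
    Tendsto (fun k => γ * (w k n - w k m) * outsideInteraction Γ (w k) s n) atTop (𝓝 0) := by
  have hε2 : ∀ k, (ε k : ℂ) ^ 2 ≠ 0 := fun k => by exact_mod_cast pow_ne_zero 2 (hε k)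
  simp only [outsideInteraction, mul_sum]
  rw [← sum_const_zero (s := sᶜ)]
  refine tendsto_finsetSum _ fun l hl => ?_
  have hlim := ((hnm.trans_prec (hiso l (mem_compl.1 hl)) hε2).const_mul (γ * Γ l))
  rw [mul_zero] at hlim
  refine hlim.congr fun k => ?_
  ring

end Asymptotics

theorem isolated_triangle_no_circle_general
    {M : ℕ} (Γ : Fin (M + 3) → ℝ)
    (Λ : ℕ → ℂ) (z w : ℕ → Fin (M + 3) → ℂ) (ε : ℕ → ℝ)
    (hsing : IsSingularSeq Γ Λ z w ε)
    (hstroke : ∀ i ∈ ({0, 1, 2} : Finset (Fin (M + 3))),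
      ∀ j ∈ ({0, 1, 2} : Finset (Fin (M + 3))), i ≠ j →
        SimEq (fun k => w k i - w k j) (fun k => ((ε k : ℂ)) ^ 2))
    (hiso : ∀ i ∈ ({0, 1, 2} : Finset (Fin (M + 3))),
      ∀ l ∉ ({0, 1, 2} : Finset (Fin (M + 3))),
        Prec (fun k => ((ε k : ℂ)) ^ 2) (fun k => w k i - w k l))
    (hnocirc : ∀ j ∈ ({0, 1, 2} : Finset (Fin (M + 3))),
      Prec (fun k => z k j) (fun k => ((ε k ^ (-2 : ℤ) : ℝ) : ℂ))) :
    Γ 0 * Γ 1 + Γ 1 * Γ 2 + Γ 2 * Γ 0 = 0 := by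
  obtain ⟨hncc, hΛ, hε, -⟩ := hsing
  have hε0 : ∀ k, ε k ≠ 0 := fun k => (hε k).ne'
  have h₀₁ : (0 : Fin (M + 3)) ≠ 1 := by simp
  have h2 : 2 % (M + 3) = 2 := Nat.mod_eq_of_lt (by omega)
  have h₀₂ : (0 : Fin (M + 3)) ≠ 2 := by simp [Fin.ext_iff, h2]
  have h₁₂ : (1 : Fin (M + 3)) ≠ 2 := by simp [Fin.ext_iff, h2]
  have hmoment n (hn : n ∈ ({0, 1, 2} : Finset (Fin (M + 3)))) (hn0 : n ≠ 0) :=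
    tendsto_mul_unit_mul_zero hε0 hΛ (hstroke n hn 0 (by simp) hn0).1 (hnocirc n hn) (Γ n)
  have houter n (hn : n ∈ ({0, 1, 2} : Finset (Fin (M + 3)))) (hn0 : n ≠ 0) :=
    tendsto_mul_outsideInteraction_zero (Γ := Γ) hε0 (hstroke n hn 0 (by simp) hn0).1
      (hiso n hn) (Γ n)
  have hlim := ((hmoment 1 (by simp) h₀₁.symm).add (hmoment 2 (by simp) h₀₂.symm)).sub
    ((houter 1 (by simp) h₀₁.symm).add (houter 2 (by simp) h₀₂.symm))
  simp only [(hncc _).triangle_moment_eq h₀₁ h₀₂ h₁₂, add_sub_cancel_right, add_zero,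
    sub_zero] at hlim
  exact_mod_cast tendsto_nhds_unique tendsto_const_nhds hlim

/-- Proposition 3.3: an isolated z-stroke triangle (vertices 1, 2, 3, here indices
0, 1, 2) with no z-circled vertex forces L₁₂₃ = 0. -/
theorem isolated_triangle_no_circle
    {M : ℕ} (Γ : Fin (M + 3) → ℝ) (hΓ : ∀ j, Γ j ≠ 0)
    (Λ : ℕ → ℂ) (z w : ℕ → Fin (M + 3) → ℂ) (ε : ℕ → ℝ)
    (hsing : IsSingularSeq Γ Λ z w ε)
    (hstroke : ∀ i ∈ ({0, 1, 2} : Finset (Fin (M + 3))),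
      ∀ j ∈ ({0, 1, 2} : Finset (Fin (M + 3))), i ≠ j →
        SimEq (fun k => w k i - w k j) (fun k => ((ε k : ℂ)) ^ 2))
    (hiso : ∀ i ∈ ({0, 1, 2} : Finset (Fin (M + 3))),
      ∀ l ∉ ({0, 1, 2} : Finset (Fin (M + 3))),
        Prec (fun k => ((ε k : ℂ)) ^ 2) (fun k => w k i - w k l))
    (hnocirc : ∀ j ∈ ({0, 1, 2} : Finset (Fin (M + 3))),
      Prec (fun k => z k j) (fun k => ((ε k ^ (-2 : ℤ) : ℝ) : ℂ))) :
    Γ 0 * Γ 1 + Γ 1 * Γ 2 + Γ 2 * Γ 0 = 0 :=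
  isolated_triangle_no_circle_general Γ Λ z w ε hsing hstroke hiso hnocirc
end
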